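/- Let F_3 be the free group on generators x_1, x_2, x_3. Define automorphisms of F_3: S_1 sends x_1 ↦ x_1x_2x_1^{-1}, x_2 ↦ x_1, x_3 ↦ x_3; S_2 sends x_2 ↦ x_2x_3x_2^{-1}, x_3 ↦ x_2, x_1 ↦ x_1; R_1 exchanges x_1 and x_2 fixing x_3; R_2 exchanges x_2 and x_3 fixing x_1. Then the automorphism obtained by applying first R_2, then S_1, then S_2 is NOT equal to the automorphism obtained by applying first S_1, then S_2, then R_1: the first sends x_1 to x_1x_2x_3x_2^{-1}x_1^{-1} while the second sends x_1 to x_2x_1x_3x_1^{-1}x_2^{-1}, and x_1x_2x_3x_2^{-1}x_1^{-1} ≠ x_2x_1x_3x_1^{-1}x_2^{-1} in F_3. (Hence the forbidden relation (F2) does not hold in the welded braid group WB_n, which embeds in Aut(F_n).) -/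

import Mathlib

open FreeGroup

/-- The Artin automorphism S₁ of F₃ = ⟨x₁,x₂,x₃⟩ (as an endomorphism,
indices 0-based): x₁ ↦ x₁x₂x₁⁻¹, x₂ ↦ x₁, x₃ ↦ x₃. -/
def S1 : FreeGroup (Fin 3) →* FreeGroup (Fin 3) :=
  FreeGroup.lift ![of 0 * of 1 * (of 0)⁻¹, of 0, of 2]

/-- The Artin automorphism S₂ of F₃: x₂ ↦ x₂x₃x₂⁻¹, x₃ ↦ x₂, x₁ ↦ x₁. -/
def S2 : FreeGroup (Fin 3) →* FreeGroup (Fin 3) :=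
  FreeGroup.lift ![of 0, of 1 * of 2 * (of 1)⁻¹, of 1]

/-- The permutation automorphism R₁ of F₃ exchanging x₁ and x₂, fixing x₃. -/
def R1 : FreeGroup (Fin 3) →* FreeGroup (Fin 3) :=
  FreeGroup.lift ![of 1, of 0, of 2]

/-- The permutation automorphism R₂ of F₃ exchanging x₂ and x₃, fixing x₁. -/
def R2 : FreeGroup (Fin 3) →* FreeGroup (Fin 3) :=
  FreeGroup.lift ![of 0, of 2, of 1]

/- In `S₃`, with `a ↦ (0 1)` and `b ↦ (1 2)`, the elements `ab` and `ba` are mutually inverse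
3-cycles, so the two conjugates of the transposition that `c` maps to would force `(ab)²`, hence
`ab`, to commute with it, which a 3-cycle and a transposition never do. -/
theorem FreeGroup.conj_of_mul_of_ne_conj_swap {α : Type*} {a b : α} (hab : a ≠ b) (c : α) :
    of a * of b * of c * (of b)⁻¹ * (of a)⁻¹ ≠ of b * of a * of c * (of a)⁻¹ * (of b)⁻¹ := by
  classical
  intro h
  have hf := congrArg (FreeGroup.lift fun x : α =>
    if x = a then Equiv.swap (0 : Fin 3) 1 else if x = b then Equiv.swap 1 2 else Equiv.swap 0 2) h
  simp only [_root_.map_mul, _root_.map_inv, lift_apply_of, if_pos, if_neg hab.symm] at hf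
  split_ifs at hf <;> revert hf <;> decide

theorem S2_comp_S1_comp_R2_apply_of_zero :
    (S2.comp (S1.comp R2)) (of 0) = of 0 * of 1 * of 2 * (of 1)⁻¹ * (of 0)⁻¹ := by
  simp [S1, S2, R2, mul_assoc]

theorem R1_comp_S2_comp_S1_apply_of_zero :
    (R1.comp (S2.comp S1)) (of 0) = of 1 * of 0 * of 2 * (of 0)⁻¹ * (of 1)⁻¹ := by
  simp [S1, S2, R1, mul_assoc]

/-- **Remark (the forbidden relation (F2) fails in the welded braid group).**
Applying first R₂, then S₁, then S₂ sends x₁ to x₁x₂x₃x₂⁻¹x₁⁻¹, while applying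
first S₁, then S₂, then R₁ sends x₁ to x₂x₁x₃x₁⁻¹x₂⁻¹; these two words are
distinct in F₃, so the two composite automorphisms are distinct. -/
theorem forbidden_F2_fails_in_AutF3 :
    (S2.comp (S1.comp R2)) (of 0) = of 0 * of 1 * of 2 * (of 1)⁻¹ * (of 0)⁻¹ ∧
    (R1.comp (S2.comp S1)) (of 0) = of 1 * of 0 * of 2 * (of 0)⁻¹ * (of 1)⁻¹ ∧
    (of 0 * of 1 * of 2 * (of 1)⁻¹ * (of 0)⁻¹ : FreeGroup (Fin 3))
      ≠ of 1 * of 0 * of 2 * (of 0)⁻¹ * (of 1)⁻¹ ∧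
    S2.comp (S1.comp R2) ≠ R1.comp (S2.comp S1) := by
  have hne := conj_of_mul_of_ne_conj_swap (by decide : (0 : Fin 3) ≠ 1) 2
  refine ⟨S2_comp_S1_comp_R2_apply_of_zero, R1_comp_S2_comp_S1_apply_of_zero, hne, fun h => hne ?_⟩
  rw [← S2_comp_S1_comp_R2_apply_of_zero, ← R1_comp_S2_comp_S1_apply_of_zero, h]
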